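/- arXiv:math/9807117 — 9 statements merged into one kernel-verified Lean document; each statement's English description precedes it below -/
import Mathlib

section
/- Let G be a group and let ℤ = ⟨x⟩ be the infinite cyclic group. In the regular wreath product G ≀ ℤ, for every element φ of the base group G^ℤ there exists ψ ∈ G^ℤ such that φ = [ψ, x] (the commutator of ψ with the generator x). -/
/-- The translation action of `B` on the base group `B → G` of the regular wreath product. -/
def wrAut (G B : Type*) [Group G] [Group B] : B →* MulAut (B → G) where
  toFun b :=
    { toFun := fun f x => f (x * b)
      invFun := fun f x => f (x * b⁻¹)
      left_inv := fun f => by funext x; simp [mul_assoc]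
      right_inv := fun f => by funext x; simp [mul_assoc]
      map_mul' := fun f g => rfl }
  map_one' := by ext f x; simp
  map_mul' := fun a b => by ext f x; simp [mul_assoc]

/-- The regular wreath product `G ≀ B`. -/
abbrev Wr (G B : Type*) [Group G] [Group B] : Type _ :=
  SemidirectProduct (B → G) B (wrAut G B)

/-- The infinite cyclic group, written multiplicatively. -/
abbrev Zm : Type := Multiplicative ℤ

/-- The generator  of the infinite cyclic group. -/
abbrev zGen : Zm := Multiplicative.ofAdd 1

/-!
The commutator `[ψ, x]` is the function `n ↦ (ψ n)⁻¹ * ψ (n - 1)`, so it suffices to solve the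
recurrence `ψ (n + 1) = ψ n * (φ (n + 1))⁻¹` on all of `ℤ`; this is possible in both directions
because right multiplication by a group element is a bijection.
-/

theorem Int.exists_forall_add_one_eq_perm {α : Type*} [Nonempty α] (σ : ℤ → Equiv.Perm α) :
    ∃ f : ℤ → α, ∀ n, f (n + 1) = σ n (f n) := by
  obtain ⟨a⟩ := ‹Nonempty α›
  let f : ℤ → α := fun z => Int.inductionOn' (motive := fun _ => α) z 0 a
    (fun k _ x => σ k x) (fun k _ x => (σ (k - 1)).symm x)
  refine ⟨f, fun n => ?_⟩
  rcases le_or_gt 0 n with hn | hn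
  · exact Int.inductionOn'_add_one hn
  · have hpred : f (n + 1 - 1) = (σ (n + 1 - 1)).symm (f (n + 1)) :=
      Int.inductionOn'_sub_one (by omega)
    rw [add_sub_cancel_right] at hpred
    rw [hpred, Equiv.apply_symm_apply]

namespace Wr

open SemidirectProduct

theorem inl_inv_mul_inr_inv_mul_inl_mul_inr {G B : Type*} [Group G] [Group B]
    (ψ : B → G) (b : B) :
    (inl ψ : Wr G B)⁻¹ * (inr b)⁻¹ * inl ψ * inr b = inl (fun x => (ψ x)⁻¹ * ψ (x * b⁻¹)) := by
  ext x
  · simp only [mul_left, inv_left, left_inl, right_inl, left_inr, right_inr, inv_right, mul_right]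
    simp [wrAut]
  · simp

end Wr

open SemidirectProduct in
/-- In , every element  of the base group  is the commutator
 of some element  of the base group with the generator  of . -/
theorem stmt_0 (G : Type*) [Group G] (φ : Zm → G) :
    ∃ ψ : Zm → G,
      (inl φ : Wr G Zm) = (inl ψ)⁻¹ * (inr zGen)⁻¹ * inl ψ * inr zGen := by
  obtain ⟨ψ, hψ⟩ := Int.exists_forall_add_one_eq_perm (α := G)
    fun n => Equiv.mulRight (φ (.ofAdd (n + 1)))⁻¹
  refine ⟨fun x => ψ x.toAdd, ?_⟩
  rw [Wr.inl_inv_mul_inr_inv_mul_inl_mul_inr]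
  congr 1
  funext x
  have h := hψ (x.toAdd - 1)
  simp only [sub_add_cancel, Equiv.coe_mulRight] at h
  simp [h, sub_eq_add_neg]
end

section
/- Let G be a group and let ℤ be the infinite cyclic group. The commutator subgroup of the regular wreath product G ≀ ℤ equals the base group G^ℤ. -/
/-!
The quotient of `G ≀ ℤ` by the base group is `ℤ`, which is abelian, so the commutator subgroup lies
in the base. Conversely, for a base element `g` and the generator `t`, `⁅g, t⁆` is the base element
`n ↦ g n * (g (n + 1))⁻¹`, and every `f : ℤ → G` has this form: the recursion
`g n = f n * g (n + 1)` can be run in both directions, and its solution is read off as the inverse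
of the coordinate at `0` of the base part of `(f · t) ^ n`, for all `n ∈ ℤ`.
-/

open SemidirectProduct
open scoped commutatorElement

namespace Wr

variable {G B : Type*} [Group G] [Group B]

@[simp]
lemma wrAut_apply (b : B) (f : B → G) (x : B) : wrAut G B b f x = f (x * b) := rfl

lemma commutatorElement_inl_inr (g : B → G) (b : B) :
    ⁅(inl g : Wr G B), (inr b : Wr G B)⁆ = inl fun x => g x * (g (x * b))⁻¹ := by
  ext <;> simp [commutatorElement_def]

lemma exists_mul_inv_mul_zGen_eq (f : Zm → G) :
    ∃ g : Zm → G, ∀ x, g x * (g (x * zGen))⁻¹ = f x := by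
  set σ : Wr G Zm := inl f * inr zGen
  have right_zpow (n : ℤ) : (σ ^ n).right = zGen ^ n := by
    simpa [σ] using map_zpow (rightHom : Wr G Zm →* Zm) σ n
  have left_zpow_succ (n : ℤ) : (σ ^ (n + 1)).left 1 = (σ ^ n).left 1 * f (zGen ^ n) := by
    rw [zpow_add_one, mul_left, right_zpow, Pi.mul_apply, wrAut_apply]
    simp [σ]
  refine ⟨fun x => ((σ ^ x.toAdd).left 1)⁻¹, fun x => ?_⟩
  have hx : zGen ^ x.toAdd = x := by rw [← ofAdd_zsmul, smul_eq_mul, mul_one, ofAdd_toAdd]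
  simp only [toAdd_mul, toAdd_ofAdd, inv_inv, left_zpow_succ, inv_mul_cancel_left, hx]

end Wr

open SemidirectProduct in
/-- The commutator subgroup of the regular wreath product of a group with the infinite
cyclic group equals the base group. -/
theorem stmt_1 (G : Type*) [Group G] :
    commutator (Wr G Zm) =
      (inl : (Zm → G) →* Wr G Zm).range := by
  refine le_antisymm ?_ ?_
  · rw [range_inl_eq_ker_rightHom]
    exact Abelianization.commutator_subset_ker _
  · rintro _ ⟨f, rfl⟩
    obtain ⟨g, hg⟩ := Wr.exists_mul_inv_mul_zGen_eq f
    rw [← funext hg, ← Wr.commutatorElement_inl_inr]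
    exact Subgroup.commutator_mem_commutator (Subgroup.mem_top _) (Subgroup.mem_top _)
end

section
/- Let K be a group in which every element of the commutator subgroup [K,K] is itself a single commutator [a,b] for some a,b ∈ K. Then for any index set I, the commutator subgroup of the direct power K^I equals ([K,K])^I, i.e. the set of I-tuples each of whose coordinates lies in [K,K]. -/
/-!
A tuple of commutators `⁅a i, b i⁆` is the single commutator `⁅a, b⁆` in the product. So if every
element of `[K, K]` is a commutator, every tuple in `[K, K]^I` is a commutator in `K^I`; the
reverse inclusion holds coordinatewise.
-/

open Subgroup

section Pi

variable {ι : Type*} {G : ι → Type*} [∀ i, Group (G i)]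

theorem commutator_pi_le_pi_commutator :
    commutator (∀ i, G i) ≤ Subgroup.pi Set.univ fun i => commutator (G i) := by
  simpa only [commutator_def, pi_top] using
    commutator_pi_pi_le (fun i => (⊤ : Subgroup (G i))) fun i => ⊤

theorem commutatorSet_pi :
    commutatorSet (∀ i, G i) = Set.univ.pi fun i => commutatorSet (G i) := by
  ext g
  simp only [mem_commutatorSet_iff, Set.mem_univ_pi]
  constructor
  · rintro ⟨a, b, rfl⟩ i
    exact ⟨a i, b i, rfl⟩
  · intro hg
    choose a b hab using hg
    exact ⟨a, b, funext hab⟩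

theorem commutator_pi_eq_pi_commutator_of_subset_commutatorSet
    (hG : ∀ i, (commutator (G i) : Set (G i)) ⊆ commutatorSet (G i)) :
    commutator (∀ i, G i) = Subgroup.pi Set.univ fun i => commutator (G i) := by
  refine le_antisymm commutator_pi_le_pi_commutator fun g hg => ?_
  have hg' : g ∈ commutatorSet (∀ i, G i) := by
    rw [commutatorSet_pi]
    exact fun i _ => hG i (hg i trivial)
  rw [commutator_eq_closure]
  exact subset_closure hg'

end Pi

theorem coe_commutator_subset_commutatorSet_of_forall {K : Type*} [Group K]
    (h : ∀ g ∈ commutator K, ∃ a b : K, g = a⁻¹ * b⁻¹ * a * b) :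
    (commutator K : Set K) ⊆ commutatorSet K := by
  intro g hg
  obtain ⟨a, b, rfl⟩ := h g hg
  exact ⟨a⁻¹, b⁻¹, by simp [commutatorElement_def]⟩

/-- If every element of the commutator subgroup of a group K is a single commutator
a⁻¹b⁻¹ab, then for any index set I the commutator subgroup of the direct power K^I is
the set of I-tuples all of whose coordinates lie in the commutator subgroup of K. -/
theorem stmt_2 (K : Type*) [Group K]
    (h : ∀ g ∈ commutator K, ∃ a b : K, g = a⁻¹ * b⁻¹ * a * b) (I : Type*) :
    commutator (I → K) = Subgroup.pi Set.univ (fun _ : I => commutator K) :=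
  commutator_pi_eq_pi_commutator_of_subset_commutatorSet fun _ =>
    coe_commutator_subset_commutatorSet_of_forall h
end

section
/- For any group G and any set I, the commutator subgroup of the direct power (G ≀ ℤ)^I equals ([G ≀ ℤ, G ≀ ℤ])^I, the product over I of copies of the commutator subgroup of G ≀ ℤ. -/
/-! Every element of the base group of `G ≀ ℤ` is the commutator `[h, t]` of a base element `h`
with the generator `t`: this amounts to solving `h n * (h (n + 1))⁻¹ = f n`, which is a
recursion in both directions from `h 0 = 1`. Since the commutator subgroup of `G ≀ ℤ` is
contained in the base group, every element of it is a single commutator. Commutators in a direct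
power can therefore be assembled coordinatewise; for an infinite index set this is what makes
the product of the commutator subgroups no larger than the commutator subgroup of the product. -/

open scoped commutatorElement

theorem commutator_pi_eq_pi_of_subset_commutatorSet {η : Type*} {Gs : η → Type*}
    [∀ i, Group (Gs i)] (h : ∀ i, (commutator (Gs i) : Set (Gs i)) ⊆ commutatorSet (Gs i)) :
    commutator (∀ i, Gs i) = Subgroup.pi Set.univ fun i => commutator (Gs i) := by
  refine le_antisymm ?_ fun g hg => ?_
  · simpa only [commutator_def, Subgroup.pi_top] using
      Subgroup.commutator_pi_pi_le (fun i => ⊤) (fun i => ⊤)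
  · choose a b hab using fun i => h i (hg i (Set.mem_univ i))
    obtain rfl : ⁅a, b⁆ = g := funext hab
    exact Subgroup.commutator_mem_commutator (Subgroup.mem_top a) (Subgroup.mem_top b)

section Telescope

variable {G : Type*} [Group G]

def telescope (g : ℤ → G) : ℤ → G
  | .ofNat 0 => 1
  | .ofNat (n + 1) => (g (.ofNat n))⁻¹ * telescope g (.ofNat n)
  | .negSucc 0 => g (.negSucc 0)
  | .negSucc (n + 1) => g (.negSucc (n + 1)) * telescope g (.negSucc n)
termination_by n => n.natAbs

theorem telescope_mul_inv_succ (g : ℤ → G) (n : ℤ) :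
    telescope g n * (telescope g (n + 1))⁻¹ = g n := by
  match n with
  | .ofNat k =>
    change _ * (telescope g (.ofNat (k + 1)))⁻¹ = _
    rw [telescope.eq_2]
    group
  | .negSucc 0 =>
    change _ * (telescope g (.ofNat 0))⁻¹ = _
    rw [telescope.eq_1, telescope.eq_3]
    group
  | .negSucc (k + 1) =>
    change _ * (telescope g (.negSucc k))⁻¹ = _
    rw [telescope.eq_4]
    group

end Telescope

namespace Wr

open SemidirectProduct

variable {G B : Type*} [Group G] [Group B]

theorem commutator_inl_inr (f : B → G) (b : B) :
    ⁅(inl f : Wr G B), (inr b : Wr G B)⁆ = inl fun x => f x * (f (x * b))⁻¹ := by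
  ext x
  · simp only [commutatorElement_def, mul_left, inv_left, mul_right, inv_right, left_inl,
      right_inl, left_inr, right_inr]
    simp [wrAut]
  · simp [commutatorElement_def]

theorem mem_commutatorSet_of_right_eq_one {w : Wr G Zm} (hw : w.right = 1) :
    w ∈ commutatorSet (Wr G Zm) := by
  let h : Zm → G := fun x => telescope (fun n => w.left (.ofAdd n)) x.toAdd
  refine ⟨inl h, inr zGen, ?_⟩
  rw [commutator_inl_inr]
  ext x
  · exact telescope_mul_inv_succ _ x.toAdd
  · exact hw.symm

theorem commutator_subset_commutatorSet :
    (commutator (Wr G Zm) : Set (Wr G Zm)) ⊆ commutatorSet (Wr G Zm) := fun _ hw =>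
  mem_commutatorSet_of_right_eq_one <|
    Abelianization.commutator_subset_ker rightHom hw

end Wr

/-- For any group G and any set I, the commutator subgroup of the direct power of copies of
the wreath product of G with the infinite cyclic group, indexed by I, is the product over I
of copies of the commutator subgroup. -/
theorem stmt_3 (G : Type*) [Group G] (I : Type*) :
    commutator (I → Wr G Zm) =
      Subgroup.pi Set.univ (fun _ : I => commutator (Wr G Zm)) :=
  commutator_pi_eq_pi_of_subset_commutatorSet fun _ => Wr.commutator_subset_commutatorSet
end

section
/- Let G be a group, and define recursively K_{G,1} = G ≀ ℤ and K_{G,n+1} = K_{G,n} ≀ ℤ. Then the n-th term of the derived series of K_{G,n} is isomorphic to the direct power G^{ℤ^n}. -/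
/-- The iterated wreath products: KGn G 0 = G wr Z, KGn G (n+1) = (KGn G n) wr Z,
so that KGn G (n-1) is the group written K_{G,n} in the paper. -/
def KGn (G : Type u) [Group G] : ℕ → GrpCat.{u}
  | 0 => GrpCat.of (Wr G Zm)
  | (n + 1) => GrpCat.of (Wr (KGn G n) Zm)

/-!
In `K ≀ ℤ` every element `f` of the base group `ℤ → K` is the commutator of some `g` in the base
with the generator of `ℤ`: it suffices that `g m = f m * g (m + 1)`, which can be solved by
recursion in both directions from `g 0 = 1`. Since the base is also the kernel of the projection
to the abelian group `ℤ`, the derived subgroup of `K ≀ ℤ` is `ℤ → K`. This happens uniformly in each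
coordinate of a power, so the derived subgroup of `J → K ≀ ℤ` is `J × ℤ → K`; an induction on the
depth of the iterated wreath product, over all powers `J` at once, removes one factor `ℤ` for each
step of the derived series.
-/

open scoped commutatorElement

section Coboundary

variable {K : Type*} [Group K]

def coboundaryPrimitive (f : ℤ → K) (m : ℤ) : K :=
  Int.inductionOn' (motive := fun _ => K) m 0 1 (fun k _ g => (f k)⁻¹ * g)
    (fun k _ g => f (k - 1) * g)

theorem coboundaryPrimitive_eq_mul (f : ℤ → K) (m : ℤ) :
    coboundaryPrimitive f m = f m * coboundaryPrimitive f (m + 1) := by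
  rcases le_or_gt 0 m with hm | hm
  · rw [coboundaryPrimitive, coboundaryPrimitive, Int.inductionOn'_add_one hm, mul_inv_cancel_left]
  · obtain ⟨j, hj, rfl⟩ : ∃ j ≤ 0, m = j - 1 := ⟨m + 1, by omega, by omega⟩
    rw [coboundaryPrimitive, Int.inductionOn'_sub_one hj, sub_add_cancel]
    rfl

theorem exists_mul_inv_mul_zGen_eq (f : Zm → K) :
    ∃ g : Zm → K, ∀ x, g x * (g (x * zGen))⁻¹ = f x := by
  refine ⟨fun x => coboundaryPrimitive (fun m => f (Multiplicative.ofAdd m)) x.toAdd, fun x => ?_⟩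
  have hsucc : (x * zGen).toAdd = x.toAdd + 1 := rfl
  dsimp only
  rw [coboundaryPrimitive_eq_mul _ x.toAdd, hsucc, mul_inv_cancel_right, ofAdd_toAdd]

end Coboundary

section WreathProduct

open SemidirectProduct

variable {K B : Type*} [Group K] [Group B]

theorem wrAut_apply (b : B) (f : B → K) (x : B) : wrAut K B b f x = f (x * b) := rfl

theorem commutatorElement_inl_inr (g : B → K) (b : B) :
    ⁅(inl g : Wr K B), (inr b : Wr K B)⁆ = inl (fun x => g x * (g (x * b))⁻¹) := by
  ext x <;> simp [commutatorElement_def, wrAut_apply]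

theorem exists_commutatorElement_inl_inr_zGen (f : Zm → K) :
    ∃ g : Zm → K, ⁅(inl g : Wr K Zm), (inr zGen : Wr K Zm)⁆ = inl f := by
  obtain ⟨g, hg⟩ := exists_mul_inv_mul_zGen_eq f
  exact ⟨g, by rw [commutatorElement_inl_inr]; exact congrArg inl (funext hg)⟩

variable (K B) (J : Type*)

def piKerRightHomEquiv :
    ((rightHom : Wr K B →* B).compLeft J).ker ≃* (J × B → K) where
  toFun F p := (F.1 p.1).left p.2
  invFun h := ⟨fun j => inl fun b => h (j, b), by rw [MonoidHom.mem_ker]; rfl⟩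
  left_inv F := by
    have hright (j : J) : (F.1 j).right = 1 := congrFun (MonoidHom.mem_ker.mp F.2) j
    ext j : 2
    exact SemidirectProduct.ext rfl (hright j).symm
  right_inv h := rfl
  map_mul' F₁ F₂ := by
    have hright (j : J) : (F₁.1 j).right = 1 := congrFun (MonoidHom.mem_ker.mp F₁.2) j
    funext p
    simp [SemidirectProduct.mul_left, hright]

theorem commutator_pi_wr_zGen :
    commutator (J → Wr K Zm) = ((rightHom : Wr K Zm →* Zm).compLeft J).ker := by
  refine le_antisymm (Abelianization.commutator_subset_ker _) fun F hF => ?_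
  have hright (j : J) : (F j).right = 1 := congrFun (MonoidHom.mem_ker.mp hF) j
  choose g hg using fun j => exists_commutatorElement_inl_inr_zGen (F j).left
  have hF : F = ⁅fun j => (inl (g j) : Wr K Zm), fun _ => inr zGen⁆ := by
    funext j
    change F j = ⁅(inl (g j) : Wr K Zm), (inr zGen : Wr K Zm)⁆
    rw [hg]
    exact SemidirectProduct.ext rfl (hright j)
  rw [hF]
  exact Subgroup.commutator_mem_commutator (Subgroup.mem_top _) (Subgroup.mem_top _)

noncomputable def commutatorPiWrEquiv : commutator (J → Wr K Zm) ≃* (J × Zm → K) :=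
  (MulEquiv.subgroupCongr (commutator_pi_wr_zGen K J)).trans (piKerRightHomEquiv K Zm J)

end WreathProduct

section DerivedSeries

noncomputable def MulEquiv.derivedSeriesCongr {G H : Type*} [Group G] [Group H]
    (e : G ≃* H) (n : ℕ) : derivedSeries G n ≃* derivedSeries H n :=
  ((derivedSeries G n).equivMapOfInjective e.toMonoidHom e.injective).trans
    (MulEquiv.subgroupCongr (map_derivedSeries_eq e.surjective n))

variable (G : Type*) [Group G]

theorem map_subtype_derivedSeries_commutator (n : ℕ) :
    (derivedSeries (commutator G) n).map (commutator G).subtype = derivedSeries G (n + 1) := by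
  induction n with
  | zero => rw [derivedSeries_zero, ← MonoidHom.range_eq_map, Subgroup.range_subtype,
      derivedSeries_one]
  | succ n ih => rw [derivedSeries_succ, Subgroup.map_commutator, ih]; rfl

noncomputable def derivedSeriesSuccEquiv (n : ℕ) :
    derivedSeries G (n + 1) ≃* derivedSeries (commutator G) n :=
  (MulEquiv.subgroupCongr (map_subtype_derivedSeries_commutator G n).symm).trans
    ((derivedSeries (commutator G) n).equivMapOfInjective _ (commutator G).subtype_injective).symm

end DerivedSeries

def prodZmEquivProdFinSucc (J : Type*) (k : ℕ) :
    (J × Zm) × (Fin (k + 1) → ℤ) ≃ J × (Fin (k + 2) → ℤ) :=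
  (Equiv.prodAssoc _ _ _).trans <| Equiv.prodCongr (Equiv.refl J) <|
    (Equiv.prodCongr Multiplicative.toAdd (Equiv.refl _)).trans (Fin.consEquiv fun _ => ℤ)

theorem nonempty_derivedSeries_pi_KGn_mulEquiv (G : Type u) [Group G] (k : ℕ) :
    ∀ J : Type*, Nonempty (derivedSeries (J → KGn G k) (k + 1) ≃* (J × (Fin (k + 1) → ℤ) → G)) := by
  induction k with
  | zero =>
    intro J
    exact ⟨(MulEquiv.subgroupCongr (derivedSeries_one _)).trans <|
      (commutatorPiWrEquiv G J).trans <| MulEquiv.arrowCongr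
        (Equiv.prodCongr (Equiv.refl J) (Multiplicative.toAdd.trans (Equiv.funUnique (Fin 1) ℤ).symm))
        (MulEquiv.refl G)⟩
  | succ k ih =>
    intro J
    obtain ⟨e⟩ := ih (J × Zm)
    exact ⟨(derivedSeriesSuccEquiv (J → Wr (KGn G k) Zm) (k + 1)).trans <|
      (MulEquiv.derivedSeriesCongr (commutatorPiWrEquiv _ J) (k + 1)).trans <|
      e.trans (MulEquiv.arrowCongr (prodZmEquivProdFinSucc J k) (MulEquiv.refl G))⟩

/-- For n ≥ 1, the n-th term of the derived series of K_{G,n} (the n-fold iterated wreath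
product of G with the infinite cyclic group) is isomorphic to the direct power of G by ℤ^n. -/
theorem stmt_4 (G : Type u) [Group G] (n : ℕ) (hn : 1 ≤ n) :
    Nonempty (↥(derivedSeries ↥(KGn G (n - 1)) n) ≃* ((Fin n → ℤ) → G)) := by
  obtain ⟨k, rfl⟩ : ∃ k, n = k + 1 := ⟨n - 1, by omega⟩
  obtain ⟨e⟩ := nonempty_derivedSeries_pi_KGn_mulEquiv G k PUnit.{1}
  exact ⟨(MulEquiv.derivedSeriesCongr (MulEquiv.funUnique PUnit.{1} (KGn G k)).symm (k + 1)).trans <|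
    e.trans (MulEquiv.arrowCongr (Equiv.punitProd _) (MulEquiv.refl G))⟩
end

section
/- Let 𝒱 be a variety of groups (a class of groups closed under subgroups, quotients, and arbitrary direct products, equivalently defined by a set of group laws) and p a prime. If 𝒱 contains all finite p-groups, then 𝒱 is the variety of all groups; equivalently, every group law that holds in all finite p-groups is a trivial law. -/
/-!
Write `w` in syllable form `x_{i₁} ^ e₁ ⋯ x_{i_k} ^ e_k` with `e_j ≠ 0` and `i_j ≠ i_{j+1}`.
On the path `0 → 1 → ⋯ → k`, let `N_i` be the adjacency matrix of the edges `j - 1 → j` with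
`i_j = i`. Adjacent edges carry distinct letters, so `N_i ^ 2 = 0` and `x_i ↦ 1 + N_i` sends
`x_i ^ e` to `1 + e • N_i`. Each of the `k` factors of the image of `w` advances at most one step
along the path, so its `(0, k)` entry is `e₁ ⋯ e_k`. This is nonzero over `ZMod (p ^ N)` once
`p ^ N > |e₁ ⋯ e_k|`, and the unitriangular matrices over `ZMod (p ^ N)` form a finite `p`-group:
for `M` strictly upper triangular of size `K`, `(1 + M) ^ p ^ (N + K) = 1` because the binomial
coefficients `(p ^ (N + K)).choose m` with `0 < m < K` are divisible by `p ^ N` (Kummer).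
-/

open Finset

def unitOneAddOfMulSelfEqZero {A : Type*} [Ring A] {x : A} (hx : x * x = 0) : Aˣ where
  val := 1 + x
  inv := 1 - x
  val_inv := by rw [add_mul, one_mul, mul_sub, mul_one, hx]; abel
  inv_val := by rw [sub_mul, one_mul, mul_add, mul_one, hx]; abel

theorem val_unitOneAddOfMulSelfEqZero_zpow {A : Type*} [Ring A] {x : A} (hx : x * x = 0) (e : ℤ) :
    ((unitOneAddOfMulSelfEqZero hx ^ e : Aˣ) : A) = 1 + e • x := by
  induction e using Int.induction_on with
  | zero => simp
  | succ e ih =>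
    rw [zpow_add_one, Units.val_mul, ih]
    change (1 + (e : ℤ) • x) * (1 + x) = _
    rw [add_mul, one_mul, mul_add, mul_one, smul_mul_assoc, hx, smul_zero, add_smul, one_smul]
    abel
  | pred e ih =>
    rw [zpow_sub_one, Units.val_mul, ih]
    change (1 + (-(e : ℤ)) • x) * (1 - x) = _
    rw [add_mul, one_mul, mul_sub, mul_one, smul_mul_assoc, hx, smul_zero, sub_smul, one_smul]
    abel

theorem Nat.Prime.pow_dvd_choose_pow_add {p : ℕ} (hp : p.Prime) (N : ℕ) {K m : ℕ} (hm0 : m ≠ 0)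
    (hmK : m < K) : p ^ N ∣ (p ^ (N + K)).choose m := by
  have hm : m ≤ p ^ (N + K) :=
    hmK.le.trans ((Nat.lt_pow_self hp.one_lt).le.trans (Nat.pow_le_pow_right hp.pos (by omega)))
  have hv : m.factorization p < K :=
    (Nat.lt_pow_self hp.one_lt).trans_le
      ((Nat.le_of_dvd (Nat.pos_of_ne_zero hm0) (Nat.ordProj_dvd m p)).trans hmK.le)
  rw [hp.pow_dvd_iff_le_factorization (Nat.choose_pos hm).ne',
    Nat.factorization_choose_prime_pow hp hm hm0]
  omega

theorem ZMod.intCast_ne_zero_of_natAbs_lt {m : ℤ} {b : ℕ} (hm : m ≠ 0) (hmb : m.natAbs < b) :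
    (m : ZMod b) ≠ 0 := by
  rw [Ne, ZMod.intCast_zmod_eq_zero_iff_dvd, Int.natCast_dvd]
  exact fun h => (Nat.le_of_dvd (Int.natAbs_pos.mpr hm) h).not_gt hmb

namespace FreeGroup

variable {ι : Type*} [DecidableEq ι]

def syllables (w : FreeGroup ι) : List (ι × ℤ) :=
  (Monoid.CoprodI.Word.equiv (freeGroupEquivCoprodI w)).toList.map
    fun s => (s.1, freeGroupUnitEquivInt s.2)

theorem lift_eq_prod_syllables {G : Type*} [Group G] (f : ι → G) (w : FreeGroup ι) :
    lift f w = (w.syllables.map fun s => f s.1 ^ s.2).prod := by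
  have hlift : lift f =
      (Monoid.CoprodI.lift fun i => lift fun _ => f i).comp freeGroupEquivCoprodI.toMonoidHom := by
    ext i; simp
  rw [hlift, MonoidHom.comp_apply, MulEquiv.coe_toMonoidHom,
    ← Monoid.CoprodI.Word.equiv.symm_apply_apply (freeGroupEquivCoprodI w)]
  change Monoid.CoprodI.lift _ (Monoid.CoprodI.Word.prod _) = _
  rw [Monoid.CoprodI.Word.prod, map_list_prod, syllables, List.map_map, List.map_map]
  refine congrArg List.prod (List.map_congr_left fun s _ => ?_)
  obtain ⟨i, g⟩ := s
  rw [Function.comp_apply, Monoid.CoprodI.lift_of, ← freeGroupUnitEquivInt.symm_apply_apply g,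
    Function.comp_apply, Equiv.apply_symm_apply]
  exact (map_zpow _ _ _).trans (congrArg (· ^ _) (lift_apply_of ..))

theorem syllables_ne_nil {w : FreeGroup ι} (hw : w ≠ 1) : w.syllables ≠ [] := by
  intro h
  apply hw
  rw [← lift_of_apply w, lift_eq_prod_syllables, h, List.map_nil, List.prod_nil]

theorem isChain_syllables (w : FreeGroup ι) : w.syllables.IsChain fun s t => s.1 ≠ t.1 :=
  (List.isChain_map _).mpr (Monoid.CoprodI.Word.equiv (freeGroupEquivCoprodI w)).chain_ne

theorem prod_syllables_ne_zero (w : FreeGroup ι) : (w.syllables.map Prod.snd).prod ≠ 0 := by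
  refine List.prod_ne_zero fun h0 => ?_
  obtain ⟨s, hs, hs0⟩ : ∃ s ∈ (Monoid.CoprodI.Word.equiv (freeGroupEquivCoprodI w)).toList,
      freeGroupUnitEquivInt s.2 = 0 := by
    simpa [syllables] using h0
  exact Monoid.CoprodI.Word.ne_one _ s hs
    ((freeGroupUnitEquivInt.eq_symm_apply.mpr hs0).trans (zpow_zero _))

end FreeGroup

namespace Matrix

variable {R : Type*} {K : ℕ}

theorem exists_ne_zero_of_mul_apply_ne_zero {ι : Type*} [Fintype ι] [NonUnitalNonAssocSemiring R]
    {M M' : Matrix ι ι R} {a b : ι} (h : (M * M') a b ≠ 0) : ∃ x, M a x ≠ 0 ∧ M' x b ≠ 0 := by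
  obtain ⟨x, -, hx⟩ := Finset.exists_ne_zero_of_sum_ne_zero h
  exact ⟨x, left_ne_zero_of_mul hx, right_ne_zero_of_mul hx⟩

def SupportedAbove [Zero R] (d : ℕ) (M : Matrix (Fin K) (Fin K) R) : Prop :=
  ∀ a b, M a b ≠ 0 → (a : ℕ) + d ≤ b

def SupportedBelow [Zero R] (k : ℕ) (M : Matrix (Fin K) (Fin K) R) : Prop :=
  ∀ a b, M a b ≠ 0 → (b : ℕ) ≤ a + k

section Semiring

variable [Semiring R] {d d' k k' : ℕ} {M M' : Matrix (Fin K) (Fin K) R}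

theorem supportedAbove_zero : SupportedAbove d (0 : Matrix (Fin K) (Fin K) R) :=
  fun _ _ h => absurd rfl h

theorem supportedAbove_one : SupportedAbove 0 (1 : Matrix (Fin K) (Fin K) R) := by
  intro a b h
  obtain rfl : a = b := by_contra fun hab => h (one_apply_ne hab)
  rfl

theorem supportedBelow_one : SupportedBelow k (1 : Matrix (Fin K) (Fin K) R) := by
  intro a b h
  obtain rfl : a = b := by_contra fun hab => h (one_apply_ne hab)
  exact Nat.le_add_right _ _

theorem SupportedAbove.mono (h : SupportedAbove d M) (hd : d' ≤ d) : SupportedAbove d' M :=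
  fun a b hab => (Nat.add_le_add_left hd a).trans (h a b hab)

theorem SupportedAbove.add (h : SupportedAbove d M) (h' : SupportedAbove d M') :
    SupportedAbove d (M + M') := by
  intro a b hab
  by_cases hM : M a b = 0
  · exact h' a b (by simpa [hM] using hab)
  · exact h a b hM

theorem SupportedBelow.add (h : SupportedBelow k M) (h' : SupportedBelow k M') :
    SupportedBelow k (M + M') := by
  intro a b hab
  by_cases hM : M a b = 0
  · exact h' a b (by simpa [hM] using hab)
  · exact h a b hM

theorem SupportedAbove.smul {S : Type*} [SMulZeroClass S R] (h : SupportedAbove d M) (s : S) :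
    SupportedAbove d (s • M) :=
  fun a b hab => h a b fun h0 => hab (by rw [smul_apply, h0, smul_zero])

theorem SupportedBelow.smul {S : Type*} [SMulZeroClass S R] (h : SupportedBelow k M) (s : S) :
    SupportedBelow k (s • M) :=
  fun a b hab => h a b fun h0 => hab (by rw [smul_apply, h0, smul_zero])

theorem SupportedAbove.mul (h : SupportedAbove d M) (h' : SupportedAbove d' M') :
    SupportedAbove (d + d') (M * M') := by
  intro a b hab
  obtain ⟨x, hax, hxb⟩ := exists_ne_zero_of_mul_apply_ne_zero hab
  have := h a x hax
  have := h' x b hxb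
  omega

theorem SupportedBelow.mul (h : SupportedBelow k M) (h' : SupportedBelow k' M') :
    SupportedBelow (k + k') (M * M') := by
  intro a b hab
  obtain ⟨x, hax, hxb⟩ := exists_ne_zero_of_mul_apply_ne_zero hab
  have := h a x hax
  have := h' x b hxb
  omega

theorem SupportedAbove.pow (h : SupportedAbove d M) (r : ℕ) : SupportedAbove (r * d) (M ^ r) := by
  induction r with
  | zero => simpa using supportedAbove_one
  | succ r ih => simpa [pow_succ, Nat.succ_mul] using ih.mul h

theorem SupportedAbove.sum {α : Type*} {s : Finset α} {f : α → Matrix (Fin K) (Fin K) R}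
    (h : ∀ i ∈ s, SupportedAbove d (f i)) : SupportedAbove d (∑ i ∈ s, f i) :=
  Finset.sum_induction f _ (fun _ _ => SupportedAbove.add) supportedAbove_zero h

theorem SupportedAbove.eq_zero (h : SupportedAbove K M) : M = 0 := by
  ext a b
  by_contra hab
  have := h a b hab
  omega

theorem SupportedBelow.list_prod {l : List (Matrix (Fin K) (Fin K) R)}
    (h : ∀ A ∈ l, SupportedBelow 1 A) : SupportedBelow l.length l.prod := by
  induction l with
  | nil => exact supportedBelow_one
  | cons A l ih =>
    rw [List.prod_cons, List.length_cons, add_comm]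
    exact (h A List.mem_cons_self).mul (ih fun B hB => h B (List.mem_cons_of_mem A hB))

theorem mul_apply_eq_of_supported {A P : Matrix (Fin K) (Fin K) R} (hA₀ : SupportedAbove 0 A)
    (hA₁ : SupportedBelow 1 A) (hP : SupportedBelow k P) (a b : Fin K) (hab : (b : ℕ) = a + k + 1) :
    (A * P) a b = A a ⟨a + 1, by omega⟩ * P ⟨a + 1, by omega⟩ b := by
  rw [mul_apply, Fintype.sum_eq_single]
  intro x hx
  by_contra hne
  obtain ⟨hax, hxb⟩ := ne_zero_and_ne_zero_of_mul hne
  have := hA₀ a x hax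
  have := hA₁ a x hax
  have := hP x b hxb
  exact hx (Fin.ext (by simp; omega))

end Semiring

section Ring

variable [Ring R] {d : ℕ} {M : Matrix (Fin K) (Fin K) R}

theorem SupportedAbove.neg (h : SupportedAbove d M) : SupportedAbove d (-M) :=
  fun a b hab => h a b (by simpa using hab)

end Ring

variable (R) in
def unitriangular [Ring R] (K : ℕ) : Subgroup (Matrix (Fin K) (Fin K) R)ˣ where
  carrier := {g | SupportedAbove 1 ((g : Matrix (Fin K) (Fin K) R) - 1)}
  one_mem' := by simpa using supportedAbove_zero
  mul_mem' {g h} hg hh := by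
    have hgh : ((g * h : (Matrix (Fin K) (Fin K) R)ˣ) : Matrix (Fin K) (Fin K) R) - 1 =
        (g - 1) * (h - 1) + ((g - 1) + (h - 1)) := by
      rw [Units.val_mul]; noncomm_ring
    change SupportedAbove 1 _
    rw [hgh]
    exact ((hg.mul hh).mono (by omega)).add (hg.add hh)
  inv_mem' {g} hg := by
    set M := (g : Matrix (Fin K) (Fin K) R) - 1
    have hinv : ((g⁻¹ : (Matrix (Fin K) (Fin K) R)ˣ) : Matrix (Fin K) (Fin K) R) =
        ∑ r ∈ range K, (-M) ^ r := by
      apply Units.inv_eq_of_mul_eq_one_right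
      have hMK : (-M) ^ K = 0 :=
        (by simpa only [mul_one] using hg.neg.pow K : SupportedAbove K ((-M) ^ K)).eq_zero
      rw [show (g : Matrix (Fin K) (Fin K) R) = 1 - -M by simp [M], mul_neg_geom_sum, hMK, sub_zero]
    change SupportedAbove 1 _
    rw [hinv]
    rcases K with _ | K
    · exact fun a => a.elim0
    rw [Finset.sum_range_succ', pow_zero, add_sub_cancel_right]
    exact SupportedAbove.sum fun r _ => (hg.neg.pow (r + 1)).mono (by omega)

theorem mem_unitriangular_iff [Ring R] {g : (Matrix (Fin K) (Fin K) R)ˣ} :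
    g ∈ unitriangular R K ↔ SupportedAbove 1 ((g : Matrix (Fin K) (Fin K) R) - 1) :=
  Iff.rfl

theorem unitriangular_pow_eq_one {p N : ℕ} [Ring R] [CharP R (p ^ N)] (hp : p.Prime)
    (g : unitriangular R K) : g ^ p ^ (N + K) = 1 := by
  have hg := mem_unitriangular_iff.mp g.2
  refine Subtype.ext (Units.ext ?_)
  rw [SubmonoidClass.coe_pow, Units.val_pow_eq_pow_val,
    ← sub_add_cancel ((g : (Matrix (Fin K) (Fin K) R)ˣ) : Matrix (Fin K) (Fin K) R) 1,
    (Commute.one_right _).add_pow, Finset.sum_eq_single 0 (fun m _ hm => ?_) (by simp)]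
  · simp
  rcases lt_or_ge m K with hmK | hmK
  · rw [← map_natCast (scalar (Fin K) : R →+* Matrix (Fin K) (Fin K) R),
      (CharP.cast_eq_zero_iff R (p ^ N) _).mpr (hp.pow_dvd_choose_pow_add N hm hmK),
      map_zero, mul_zero]
  · rw [((hg.pow m).mono (by omega)).eq_zero, zero_mul, zero_mul]

theorem isPGroup_unitriangular {p N : ℕ} [Ring R] [CharP R (p ^ N)] (hp : p.Prime) :
    IsPGroup p (unitriangular R K) :=
  fun g => ⟨N + K, unitriangular_pow_eq_one hp g⟩

section PathEdge

variable {ι : Type*} [DecidableEq ι] (c : ℕ → ι)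

def pathEdgeMatrix [Zero R] [One R] (i : ι) : Matrix (Fin K) (Fin K) R :=
  of fun a b => if (b : ℕ) = a + 1 ∧ c a = i then 1 else 0

variable [Ring R] {c}

theorem eq_succ_of_pathEdgeMatrix_apply_ne_zero {i : ι} {a b : Fin K}
    (h : (pathEdgeMatrix c i : Matrix (Fin K) (Fin K) R) a b ≠ 0) : (b : ℕ) = a + 1 ∧ c a = i := by
  by_contra hab
  exact h (if_neg hab)

theorem supportedAbove_pathEdgeMatrix (i : ι) :
    SupportedAbove 1 (pathEdgeMatrix c i : Matrix (Fin K) (Fin K) R) :=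
  fun _ _ h => (eq_succ_of_pathEdgeMatrix_apply_ne_zero h).1.ge

theorem supportedBelow_pathEdgeMatrix (i : ι) :
    SupportedBelow 1 (pathEdgeMatrix c i : Matrix (Fin K) (Fin K) R) :=
  fun _ _ h => (eq_succ_of_pathEdgeMatrix_apply_ne_zero h).1.le

theorem pathEdgeMatrix_mul_self (hc : ∀ m, m + 2 < K → c m ≠ c (m + 1)) (i : ι) :
    (pathEdgeMatrix c i : Matrix (Fin K) (Fin K) R) * pathEdgeMatrix c i = 0 := by
  ext a b
  by_contra hab
  obtain ⟨x, hax, hxb⟩ := exists_ne_zero_of_mul_apply_ne_zero hab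
  obtain ⟨hx, hai⟩ := eq_succ_of_pathEdgeMatrix_apply_ne_zero hax
  obtain ⟨hb, hxi⟩ := eq_succ_of_pathEdgeMatrix_apply_ne_zero hxb
  exact hc a (by omega) (by rw [hai, ← hxi, hx])

theorem one_add_zsmul_pathEdgeMatrix_apply_succ (e : ℤ) (i : ι) (a : Fin K) (h : (a : ℕ) + 1 < K)
    (hi : c a = i) :
    (1 + e • pathEdgeMatrix c i : Matrix (Fin K) (Fin K) R) a ⟨a + 1, h⟩ = e := by
  simp [pathEdgeMatrix, hi, one_apply_ne, Fin.ext_iff]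

theorem supportedAbove_one_add_zsmul_pathEdgeMatrix (e : ℤ) (i : ι) :
    SupportedAbove 0 (1 + e • pathEdgeMatrix c i : Matrix (Fin K) (Fin K) R) :=
  supportedAbove_one.add (((supportedAbove_pathEdgeMatrix i).smul e).mono zero_le_one)

theorem supportedBelow_one_add_zsmul_pathEdgeMatrix (e : ℤ) (i : ι) :
    SupportedBelow 1 (1 + e • pathEdgeMatrix c i : Matrix (Fin K) (Fin K) R) :=
  supportedBelow_one.add ((supportedBelow_pathEdgeMatrix i).smul e)

theorem list_prod_one_add_zsmul_pathEdgeMatrix_apply (l : List (ι × ℤ)) {a b : Fin K}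
    (hab : (b : ℕ) = a + l.length) (hc : ∀ j (hj : j < l.length), c (a + j) = l[j].1) :
    (l.map fun s => (1 + s.2 • pathEdgeMatrix c s.1 : Matrix (Fin K) (Fin K) R)).prod a b =
      ((l.map Prod.snd).prod : R) := by
  induction l generalizing a with
  | nil =>
    obtain rfl : a = b := Fin.ext (by simpa using hab.symm)
    simp
  | cons s l ih =>
    have hb : (b : ℕ) = a + l.length + 1 := by simp at hab; omega
    have htail := SupportedBelow.list_prod
        (l := l.map fun s => (1 + s.2 • pathEdgeMatrix c s.1 : Matrix (Fin K) (Fin K) R))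
        fun A hA => by
      obtain ⟨t, -, rfl⟩ := List.mem_map.mp hA
      exact supportedBelow_one_add_zsmul_pathEdgeMatrix t.2 t.1
    rw [List.length_map] at htail
    rw [List.map_cons, List.prod_cons, mul_apply_eq_of_supported
      (supportedAbove_one_add_zsmul_pathEdgeMatrix s.2 s.1)
      (supportedBelow_one_add_zsmul_pathEdgeMatrix s.2 s.1) htail a b hb,
      one_add_zsmul_pathEdgeMatrix_apply_succ s.2 s.1 a _ (hc 0 (by simp)),
      ih (by simp; omega) fun j hj => by
        rw [Nat.add_assoc, Nat.add_comm 1]; exact hc (j + 1) (by simpa)]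
    simp

end PathEdge

theorem exists_unitriangular_list_prod_zpow_apply_last {ι : Type*} [Ring R] (l : List (ι × ℤ))
    (hl : l.IsChain fun s t => s.1 ≠ t.1) :
    ∃ g : ι → unitriangular R (l.length + 1),
      ((((l.map fun s => g s.1 ^ s.2).prod : unitriangular R (l.length + 1)) :
        (Matrix (Fin (l.length + 1)) (Fin (l.length + 1)) R)ˣ) :
          Matrix (Fin (l.length + 1)) (Fin (l.length + 1)) R) 0 (Fin.last _) =
        ((l.map Prod.snd).prod : R) := by
  classical
  -- syllable `j` labels the edge `j → j + 1`; `none` pads the labels beyond the path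
  let c : ℕ → Option ι := fun m => l[m]?.map Prod.fst
  have hc : ∀ m, m + 2 < l.length + 1 → c m ≠ c (m + 1) := by
    intro m hm
    simpa [c, List.getElem?_eq_getElem, (by omega : m + 1 < l.length), (by omega : m < l.length)]
      using hl.getElem m (by omega)
  let gen (i : ι) : (Matrix (Fin (l.length + 1)) (Fin (l.length + 1)) R)ˣ :=
    unitOneAddOfMulSelfEqZero (pathEdgeMatrix_mul_self hc (some i))
  have hgen (i : ι) : gen i ∈ unitriangular R (l.length + 1) := by
    rw [mem_unitriangular_iff]
    change SupportedAbove 1 (1 + _ - 1)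
    rw [add_sub_cancel_left]
    exact supportedAbove_pathEdgeMatrix (some i)
  refine ⟨fun i => ⟨gen i, hgen i⟩, ?_⟩
  let φ := (Units.coeHom (Matrix (Fin (l.length + 1)) (Fin (l.length + 1)) R)).comp
    (unitriangular R (l.length + 1)).subtype
  have hprod : φ (l.map fun s => (⟨gen s.1, hgen s.1⟩ : unitriangular R _) ^ s.2).prod =
      ((l.map fun s => (some s.1, s.2)).map fun s => 1 + s.2 • pathEdgeMatrix c s.1).prod := by
    rw [map_list_prod, List.map_map, List.map_map]
    exact congrArg List.prod
      (List.map_congr_left fun s _ =>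
        val_unitOneAddOfMulSelfEqZero_zpow (pathEdgeMatrix_mul_self hc (some s.1)) s.2)
  refine (congrFun (congrFun hprod 0) (Fin.last _)).trans ?_
  rw [list_prod_one_add_zsmul_pathEdgeMatrix_apply _ (by simp) fun j hj => ?_, List.map_map]
  · rfl
  · simp [c, List.getElem?_eq_getElem (by simpa using hj : j < l.length)]

end Matrix

open Matrix in
/-- No nontrivial group law holds in all finite p-groups: for every prime p and every
nontrivial element w of a free group, there is a finite p-group P and a homomorphism of the
free group to P under which the image of w is nontrivial.  Consequently, a variety of groups
containing all finite p-groups satisfies no nontrivial law, i.e. is the variety of all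
groups. -/
theorem stmt_9 (p : ℕ) (hp : p.Prime) (n : ℕ) (w : FreeGroup (Fin n)) (hw : w ≠ 1) :
    ∃ (P : Type) (_ : Group P) (_ : Finite P), IsPGroup p P ∧
      ∃ f : FreeGroup (Fin n) →* P, f w ≠ 1 := by
  set l := w.syllables
  set N := (l.map Prod.snd).prod.natAbs
  have : NeZero (p ^ N) := ⟨pow_ne_zero _ hp.ne_zero⟩
  obtain ⟨g, hg⟩ :=
    exists_unitriangular_list_prod_zpow_apply_last (R := ZMod (p ^ N)) l w.isChain_syllables
  refine ⟨_, inferInstance, inferInstance, isPGroup_unitriangular (N := N) hp, FreeGroup.lift g,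
    fun h => ?_⟩
  rw [← FreeGroup.lift_eq_prod_syllables, h, OneMemClass.coe_one, Units.val_one, one_apply_ne] at hg
  · exact ZMod.intCast_ne_zero_of_natAbs_lt w.prod_syllables_ne_zero (Nat.lt_pow_self hp.one_lt)
      hg.symm
  · simpa [Fin.ext_iff, eq_comm] using FreeGroup.syllables_ne_nil hw
end

section
/- (Kaloujnine–Krasner) Let N and Q be groups and let G be any extension of N by Q, i.e. there is a short exact sequence 1 → N → G → Q → 1. Then G embeds into the regular wreath product N ≀ Q. -/
namespace Wr

variable {N M Q : Type*} [Group N] [Group M] [Group Q]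

def congrLeft (e : N ≃* M) : Wr N Q ≃* Wr M Q :=
  SemidirectProduct.congr (MulEquiv.piCongrRight fun _ => e) (MulEquiv.refl Q)
    fun _ => by ext f q; rfl

end Wr

section Extension

variable {G Q : Type*} [Group G] [Group Q] (π : G →* Q) {s : Q → G}

theorem section_mul_mul_inv_mem_ker (hs : Function.RightInverse s π) (g : G) (q : Q) :
    s q * g * (s (q * π g))⁻¹ ∈ π.ker := by
  rw [MonoidHom.mem_ker, map_mul, map_mul, map_inv, hs, hs]
  group

def kerCoord (hs : Function.RightInverse s π) (g : G) (q : Q) : π.ker :=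
  ⟨s q * g * (s (q * π g))⁻¹, section_mul_mul_inv_mem_ker π hs g q⟩

theorem kerCoord_mul (hs : Function.RightInverse s π) (g h : G) (q : Q) :
    kerCoord π hs (g * h) q = kerCoord π hs g q * kerCoord π hs h (q * π g) := by
  apply Subtype.ext
  simp only [kerCoord, Subgroup.coe_mul, map_mul, mul_assoc]
  group

def toWrKer (hs : Function.RightInverse s π) : G →* Wr π.ker Q :=
  MonoidHom.mk' (fun g => ⟨kerCoord π hs g, π g⟩) fun g h =>
    SemidirectProduct.ext (funext (kerCoord_mul π hs g h)) (map_mul π g h)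

theorem toWrKer_injective (hs : Function.RightInverse s π) :
    Function.Injective (toWrKer π hs) := by
  intro a b hab
  have hπ : π a = π b := congrArg SemidirectProduct.right hab
  have hcoord : kerCoord π hs a 1 = kerCoord π hs b 1 :=
    congrFun (congrArg SemidirectProduct.left hab) 1
  simpa [kerCoord, hπ] using hcoord

end Extension

/-- Kaloujnine–Krasner: if 1 → N → G → Q → 1 is a short exact sequence of groups, then G
embeds in the regular wreath product of N by Q. -/
theorem stmt_11 (N G Q : Type*) [Group N] [Group G] [Group Q]
    (ι : N →* G) (π : G →* Q) (hι : Function.Injective ι) (hπ : Function.Surjective π)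
    (hexact : ι.range = π.ker) :
    ∃ f : G →* Wr N Q, Function.Injective f := by
  obtain ⟨s, hs⟩ := hπ.hasRightInverse
  let e : N ≃* π.ker := (MonoidHom.ofInjective hι).trans (MulEquiv.subgroupCongr hexact)
  exact ⟨(Wr.congrLeft e.symm).toMonoidHom.comp (toWrKer π hs),
    (Wr.congrLeft e.symm).injective.comp (toWrKer_injective π hs)⟩
end

section
/- Let S be a nonabelian simple group and let I be a finite set. Every normal subgroup of the direct power S^I is the product of the coordinate subgroups S_j for j in some subset J ⊆ I. -/
/-!
If some `x ∈ K` has `x j ≠ 1`, then, the center of `S` being trivial, some commutator `⁅x j, a⁆`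
is nontrivial, and `Pi.mulSingle j ⁅x j, a⁆ = ⁅x, Pi.mulSingle j a⁆ ∈ K`. So the normal
subgroup `{s | Pi.mulSingle j s ∈ K}` of `S` is nontrivial, hence all of `S` by simplicity: `K`
contains every coordinate subgroup it meets, and in a finite product these generate every tuple
supported on the coordinates where `K` is nontrivial.
-/

theorem IsSimpleGroup.center_eq_bot {G : Type*} [Group G] [IsSimpleGroup G]
    (h : ∃ a b : G, a * b ≠ b * a) : Subgroup.center G = ⊥ := by
  refine (eq_bot_or_eq_top_of_normal _ inferInstance).resolve_right fun htop => ?_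
  obtain ⟨a, b, hab⟩ := h
  exact hab ((Subgroup.mem_center_iff.mp (htop ▸ Subgroup.mem_top a)) b).symm

open scoped commutatorElement

namespace Subgroup

variable {ι : Type*} {G : ι → Type*} [∀ i, Group (G i)]

section mulSingle

variable [DecidableEq ι]

theorem commutatorElement_mulSingle (x : ∀ i, G i) (j : ι) (a : G j) :
    ⁅x, Pi.mulSingle j a⁆ = Pi.mulSingle j ⁅x j, a⁆ := by
  funext i
  obtain rfl | hij := eq_or_ne i j
  · simp [commutatorElement_def]
  · simp [commutatorElement_def, hij]

theorem Normal.mulSingle_commutatorElement_mem {K : Subgroup (∀ i, G i)} (hK : K.Normal)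
    {x : ∀ i, G i} (hx : x ∈ K) (j : ι) (a : G j) : Pi.mulSingle j ⁅x j, a⁆ ∈ K := by
  rw [← commutatorElement_mulSingle]
  exact commutator_le_left K ⊤ (commutator_mem_commutator hx (mem_top _))

theorem Normal.mulSingle_mem_of_apply_ne_one {K : Subgroup (∀ i, G i)} (hK : K.Normal)
    {j : ι} [IsSimpleGroup (G j)] (hZ : center (G j) = ⊥) {x : ∀ i, G i} (hx : x ∈ K)
    (hxj : x j ≠ 1) (s : G j) : Pi.mulSingle j s ∈ K := by
  let N : Subgroup (G j) := K.comap (MonoidHom.mulSingle G j)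
  have hxj_center : x j ∉ center (G j) := by rwa [hZ, mem_bot]
  obtain ⟨a, ha⟩ : ∃ a : G j, ⁅x j, a⁆ ≠ 1 := by
    simpa [commutatorElement_eq_one_iff_mul_comm, mem_center_iff, eq_comm] using hxj_center
  have hN : N ≠ ⊥ := fun hbot =>
    ha (mem_bot.mp (hbot ▸ hK.mulSingle_commutatorElement_mem hx j a))
  have hN_top : N = ⊤ :=
    (IsSimpleGroup.eq_bot_or_eq_top_of_normal N (hK.comap _)).resolve_left hN
  exact (hN_top ▸ mem_top s : s ∈ N)

end mulSingle

theorem Normal.eq_pi_compl_bot [Finite ι] [∀ i, IsSimpleGroup (G i)]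
    (hZ : ∀ i, center (G i) = ⊥) {K : Subgroup (∀ i, G i)} (hK : K.Normal) :
    K = pi {i | ∃ x ∈ K, x i ≠ 1}ᶜ fun _ => ⊥ := by
  classical
  refine le_antisymm (fun y hy i hi => mem_bot.mpr (not_not.mp fun h => hi ⟨y, hy, h⟩)) ?_
  refine fun y hy => pi_mem_of_mulSingle_mem y fun i => ?_
  by_cases hi : ∃ x ∈ K, x i ≠ 1
  · obtain ⟨x, hx, hxi⟩ := hi
    exact hK.mulSingle_mem_of_apply_ne_one (hZ i) hx hxi (y i)
  · rw [mem_bot.mp (hy i hi), Pi.mulSingle_one]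
    exact K.one_mem

end Subgroup

/-- Every normal subgroup of a finite direct power of a nonabelian simple group S is the
product of the coordinate subgroups indexed by some subset J, i.e. consists of the tuples
that are trivial outside J. -/
theorem stmt_13 (S : Type*) [Group S] (hS : IsSimpleGroup S)
    (hna : ∃ a b : S, a * b ≠ b * a) (I : Type*) [Finite I]
    (K : Subgroup (I → S)) (hK : K.Normal) :
    ∃ J : Set I, K = Subgroup.pi Jᶜ (fun _ => (⊥ : Subgroup S)) :=
  ⟨_, hK.eq_pi_compl_bot fun _ => hS.center_eq_bot hna⟩
end

section
/- Let G be a group, N a solvable normal subgroup of G, and H a subgroup with NH = G. Let N = N_0 ⊵ N_1 ⊵ ... ⊵ N_m = {e} be the derived series of N (so each N_i is normal in G). If k is an index with N_k H = G and N_{k+1} H ≠ G, then setting H* = N_{k+1}H and M = N_k ∩ H*, the subgroup M is normal in G, and the quotient G/M is an (internal) semidirect product of the image of N_k by the image of H*. -/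
/-!
Write `A = N_k` and `B = H* = N_{k+1} H`. Then `A` is normal, `⁅A, A⁆ = N_{k+1} ≤ B` and
`A ⊔ B = N_k H = G`. Conjugating `x ∈ A ⊓ B` by `a ∈ A` gives `⁅a, x⁆ x ∈ B`, and conjugating
by `B` preserves both `A` and `B`; so `M = A ⊓ B` is normal. Since `M ≤ B`, the images of `A`
and `B` in `G ⧸ M` meet in the image of `A ⊓ B = M`, which is trivial.
-/

open scoped commutatorElement

namespace Subgroup

variable {G : Type*} [Group G]

theorem map_inf_of_ker_le {G' : Type*} [Group G'] (f : G →* G') (A : Subgroup G)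
    {B : Subgroup G} (hB : f.ker ≤ B) : (A ⊓ B).map f = A.map f ⊓ B.map f := by
  refine le_antisymm (map_inf_le A B f) ?_
  rintro _ ⟨⟨a, ha, rfl⟩, ⟨b, hb, hab⟩⟩
  have hba : b⁻¹ * a ∈ B := hB (by simp [MonoidHom.mem_ker, hab])
  exact ⟨a, ⟨ha, by simpa using B.mul_mem hb hba⟩, rfl⟩

theorem normal_inf_of_commutator_le {A B : Subgroup G} [A.Normal] (hAB : ⁅A, A⁆ ≤ B)
    (hsup : A ⊔ B = ⊤) : (A ⊓ B).Normal := by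
  have hA : A ≤ normalizer (A ⊓ B : Subgroup G) := by
    refine le_normalizer_iff.mpr fun a ha x hx => ⟨Normal.conj_mem inferInstance x hx.1 a, ?_⟩
    have hconj : a * x * a⁻¹ = ⁅a, x⁆ * x := by group
    exact hconj ▸ B.mul_mem (hAB (commutator_mem_commutator ha hx.1)) hx.2
  have hB : B ≤ normalizer (A ⊓ B : Subgroup G) :=
    (le_inf le_normalizer_of_normal le_normalizer).trans inf_normalizer_le_normalizer_inf
  rw [← normalizer_eq_top_iff, eq_top_iff, ← hsup]
  exact sup_le hA hB

theorem map_mk'_inf_eq_bot (A B : Subgroup G) [(A ⊓ B).Normal] :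
    A.map (QuotientGroup.mk' (A ⊓ B)) ⊓ B.map (QuotientGroup.mk' (A ⊓ B)) = ⊥ := by
  rw [← map_inf_of_ker_le _ A (by rw [QuotientGroup.ker_mk']; exact inf_le_right),
    map_eq_bot_iff, QuotientGroup.ker_mk']

theorem map_mk'_sup_eq_top {A B : Subgroup G} (M : Subgroup G) [M.Normal] (hsup : A ⊔ B = ⊤) :
    A.map (QuotientGroup.mk' M) ⊔ B.map (QuotientGroup.mk' M) = ⊤ := by
  rw [← map_sup, hsup]
  exact map_top_of_surjective _ (QuotientGroup.mk'_surjective M)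

end Subgroup

theorem stmt_15_general (G : Type*) [Group G] (N H : Subgroup G) (hN : N.Normal) (k : ℕ)
    (hk : Subgroup.map N.subtype (derivedSeries ↥N k) ⊔ H = ⊤) :
    ∃ hM : ((Subgroup.map N.subtype (derivedSeries ↥N k)) ⊓
        (Subgroup.map N.subtype (derivedSeries ↥N (k + 1)) ⊔ H)).Normal,
      haveI := hM
      (Subgroup.map
          (QuotientGroup.mk' ((Subgroup.map N.subtype (derivedSeries ↥N k)) ⊓
            (Subgroup.map N.subtype (derivedSeries ↥N (k + 1)) ⊔ H)))
          (Subgroup.map N.subtype (derivedSeries ↥N k))).Normal ∧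
      (Subgroup.map
          (QuotientGroup.mk' ((Subgroup.map N.subtype (derivedSeries ↥N k)) ⊓
            (Subgroup.map N.subtype (derivedSeries ↥N (k + 1)) ⊔ H)))
          (Subgroup.map N.subtype (derivedSeries ↥N k))) ⊓
        (Subgroup.map
          (QuotientGroup.mk' ((Subgroup.map N.subtype (derivedSeries ↥N k)) ⊓
            (Subgroup.map N.subtype (derivedSeries ↥N (k + 1)) ⊔ H)))
          (Subgroup.map N.subtype (derivedSeries ↥N (k + 1)) ⊔ H)) = ⊥ ∧
      (Subgroup.map
          (QuotientGroup.mk' ((Subgroup.map N.subtype (derivedSeries ↥N k)) ⊓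
            (Subgroup.map N.subtype (derivedSeries ↥N (k + 1)) ⊔ H)))
          (Subgroup.map N.subtype (derivedSeries ↥N k))) ⊔
        (Subgroup.map
          (QuotientGroup.mk' ((Subgroup.map N.subtype (derivedSeries ↥N k)) ⊓
            (Subgroup.map N.subtype (derivedSeries ↥N (k + 1)) ⊔ H)))
          (Subgroup.map N.subtype (derivedSeries ↥N (k + 1)) ⊔ H)) = ⊤ := by
  set A := Subgroup.map N.subtype (derivedSeries ↥N k)
  set A' := Subgroup.map N.subtype (derivedSeries ↥N (k + 1))
  have hA : A.Normal := ConjAct.normal_of_characteristic_of_normal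
  have hcomm : ⁅A, A⁆ = A' := by rw [← Subgroup.map_commutator, ← derivedSeries_succ]
  have hle : A' ≤ A := Subgroup.map_mono (derivedSeries_antitone N k.le_succ)
  have hsup : A ⊔ (A' ⊔ H) = ⊤ := by rw [← sup_assoc, sup_of_le_left hle, hk]
  have hM := Subgroup.normal_inf_of_commutator_le (hcomm.trans_le le_sup_left) hsup
  exact ⟨hM, hA.map _ (QuotientGroup.mk'_surjective _), Subgroup.map_mk'_inf_eq_bot _ _,
    Subgroup.map_mk'_sup_eq_top _ hsup⟩

/-- Let N be a solvable normal subgroup of G and H a subgroup with NH = G.  Writing N_i for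
the terms of the derived series of N (each normal in G), suppose k is an index with
N_k H = G and N_{k+1} H ≠ G.  Set H* = N_{k+1}H and M = N_k ∩ H*.  Then M is normal in G
and the quotient G/M is the internal semidirect product of the image of N_k by the image
of H*: the image of N_k is normal, the two images intersect trivially, and together they
generate G/M. -/
theorem stmt_15 (G : Type*) [Group G] (N H : Subgroup G) (hN : N.Normal)
    (hsolv : IsSolvable ↥N) (hNH : N ⊔ H = ⊤) (k : ℕ)
    (hk : Subgroup.map N.subtype (derivedSeries ↥N k) ⊔ H = ⊤)
    (hk1 : Subgroup.map N.subtype (derivedSeries ↥N (k + 1)) ⊔ H ≠ ⊤) :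
    ∃ hM : ((Subgroup.map N.subtype (derivedSeries ↥N k)) ⊓
        (Subgroup.map N.subtype (derivedSeries ↥N (k + 1)) ⊔ H)).Normal,
      haveI := hM
      (Subgroup.map
          (QuotientGroup.mk' ((Subgroup.map N.subtype (derivedSeries ↥N k)) ⊓
            (Subgroup.map N.subtype (derivedSeries ↥N (k + 1)) ⊔ H)))
          (Subgroup.map N.subtype (derivedSeries ↥N k))).Normal ∧
      (Subgroup.map
          (QuotientGroup.mk' ((Subgroup.map N.subtype (derivedSeries ↥N k)) ⊓
            (Subgroup.map N.subtype (derivedSeries ↥N (k + 1)) ⊔ H)))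
          (Subgroup.map N.subtype (derivedSeries ↥N k))) ⊓
        (Subgroup.map
          (QuotientGroup.mk' ((Subgroup.map N.subtype (derivedSeries ↥N k)) ⊓
            (Subgroup.map N.subtype (derivedSeries ↥N (k + 1)) ⊔ H)))
          (Subgroup.map N.subtype (derivedSeries ↥N (k + 1)) ⊔ H)) = ⊥ ∧
      (Subgroup.map
          (QuotientGroup.mk' ((Subgroup.map N.subtype (derivedSeries ↥N k)) ⊓
            (Subgroup.map N.subtype (derivedSeries ↥N (k + 1)) ⊔ H)))
          (Subgroup.map N.subtype (derivedSeries ↥N k))) ⊔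
        (Subgroup.map
          (QuotientGroup.mk' ((Subgroup.map N.subtype (derivedSeries ↥N k)) ⊓
            (Subgroup.map N.subtype (derivedSeries ↥N (k + 1)) ⊔ H)))
          (Subgroup.map N.subtype (derivedSeries ↥N (k + 1)) ⊔ H)) = ⊤ :=
  stmt_15_general G N H hN k hk
end
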